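/- Define ₀F₁(n/2, D²/4) = ∫_{V_{n,p}} exp(Σ_{j=1}^p d_j X_{j,j}) dμ(X), where μ is the normalized Haar measure on the Stiefel manifold V_{n,p} with n ≥ p ≥ 2 and d ∈ ℝ₊^p. Then for each i = 1,…,p the partial derivative satisfies 0 < ∂/∂d_i ₀F₁(n/2, D²/4) < ₀F₁(n/2, D²/4). -/

import Mathlib

open Matrix MeasureTheory

instance matrixMeasurableSpace {n p : ℕ} : MeasurableSpace (Matrix (Fin n) (Fin p) ℝ) :=
  inferInstanceAs (MeasurableSpace (Fin n → Fin p → ℝ))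

/-- `₀F₁(n/2, D²/4) = ∫ exp(∑ⱼ dⱼ X_{j,j}) dμ(X)` over the Stiefel manifold. -/
noncomputable def hypF {n p : ℕ} (hnp : p ≤ n) (μ : Measure (Matrix (Fin n) (Fin p) ℝ))
    (d : Fin p → ℝ) : ℝ :=
  ∫ X, Real.exp (∑ j : Fin p, d j * X (Fin.castLE hnp j) j) ∂μ

/-!
Write `x = X_{i,i}` and `c = ∑_{j ≠ i} d_j X_{j,j}`, so that `₀F₁ = ∫ exp (d_i x + c)`.
Since `|x| ≤ 1` on the Stiefel manifold, one may differentiate under the integral sign, and the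
partial derivative is `∫ x exp (d_i x + c)`. The reflection negating the `i`-th row preserves
`μ`, flips the sign of `x` and fixes `c`; averaging over it turns the derivative into
`∫ x sinh (d_i x) exp c`, which is positive because `x` does not vanish almost surely (permuting
rows, a whole column would vanish). The upper bound is `∫ (1 - x) exp (d_i x + c) > 0`, where
`x` is not almost surely `1` because the reflection would make it almost surely `-1` as well.
-/

open Real

lemma sum_update_mul {ι : Type*} [Fintype ι] [DecidableEq ι] (d y : ι → ℝ) (i : ι) (t : ℝ) :
    ∑ j, Function.update d i t j * y j = t * y i + ∑ j, Function.update d i 0 j * y j := by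
  simp [Function.update_apply, ite_mul, Finset.sum_ite, Finset.filter_eq', Finset.filter_ne']

lemma exp_mul_add_le_of_abs_le_one {x : ℝ} (hx : |x| ≤ 1) (t c : ℝ) :
    exp (t * x + c) ≤ exp |t| * exp c := by
  rw [← exp_add]
  gcongr
  calc t * x ≤ |t * x| := le_abs_self _
    _ = |t| * |x| := abs_mul _ _
    _ ≤ |t| := mul_le_of_le_one_right (abs_nonneg _) hx

section ExpIntegral

variable {Ω : Type*} [MeasurableSpace Ω] {μ : Measure Ω} {x c : Ω → ℝ}

lemma aestronglyMeasurable_exp_mul_add (hx : AEStronglyMeasurable x μ)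
    (hc : Integrable (fun ω => exp (c ω)) μ) (t : ℝ) :
    AEStronglyMeasurable (fun ω => exp (t * x ω + c ω)) μ := by
  simp_rw [exp_add]
  exact (continuous_exp.comp_aestronglyMeasurable (hx.const_mul t)).mul hc.1

lemma integrable_exp_mul_add (hx : AEStronglyMeasurable x μ) (hx1 : ∀ᵐ ω ∂μ, |x ω| ≤ 1)
    (hc : Integrable (fun ω => exp (c ω)) μ) (t : ℝ) :
    Integrable (fun ω => exp (t * x ω + c ω)) μ := by
  refine (hc.const_mul (exp |t|)).mono' (aestronglyMeasurable_exp_mul_add hx hc t) ?_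
  filter_upwards [hx1] with ω hω
  rw [norm_of_nonneg (exp_nonneg _)]
  exact exp_mul_add_le_of_abs_le_one hω t (c ω)

lemma integrable_mul_exp_mul_add (hx : AEStronglyMeasurable x μ)
    (hx1 : ∀ᵐ ω ∂μ, |x ω| ≤ 1) (hc : Integrable (fun ω => exp (c ω)) μ) (t : ℝ) :
    Integrable (fun ω => x ω * exp (t * x ω + c ω)) μ := by
  refine (integrable_exp_mul_add hx hx1 hc t).mono'
    (hx.mul (aestronglyMeasurable_exp_mul_add hx hc t)) ?_
  filter_upwards [hx1] with ω hω
  rw [norm_mul, norm_of_nonneg (exp_nonneg _)]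
  exact mul_le_of_le_one_left (exp_nonneg _) hω

theorem hasDerivAt_integral_exp_mul_add (hx : AEStronglyMeasurable x μ)
    (hx1 : ∀ᵐ ω ∂μ, |x ω| ≤ 1) (hc : Integrable (fun ω => exp (c ω)) μ) (t₀ : ℝ) :
    HasDerivAt (fun t => ∫ ω, exp (t * x ω + c ω) ∂μ)
      (∫ ω, x ω * exp (t₀ * x ω + c ω) ∂μ) t₀ := by
  refine (hasDerivAt_integral_of_dominated_loc_of_deriv_le
    (F' := fun t ω => x ω * exp (t * x ω + c ω)) (Metric.ball_mem_nhds t₀ one_pos)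
    (.of_forall (aestronglyMeasurable_exp_mul_add hx hc)) (integrable_exp_mul_add hx hx1 hc t₀)
    (hx.mul (aestronglyMeasurable_exp_mul_add hx hc t₀)) ?_ (hc.const_mul (exp (|t₀| + 1)))
    (.of_forall fun ω t _ => ?_)).2
  · filter_upwards [hx1] with ω hω t ht
    rw [norm_mul, norm_of_nonneg (exp_nonneg _)]
    have ht' : |t| ≤ |t₀| + 1 := by
      have := abs_sub_abs_le_abs_sub t t₀
      rw [Metric.mem_ball, Real.dist_eq] at ht
      linarith
    calc ‖x ω‖ * exp (t * x ω + c ω) ≤ 1 * (exp |t| * exp (c ω)) :=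
          mul_le_mul hω (exp_mul_add_le_of_abs_le_one hω t (c ω)) (exp_nonneg _) zero_le_one
      _ ≤ exp (|t₀| + 1) * exp (c ω) := by rw [one_mul]; gcongr
  · simpa [mul_comm] using (((hasDerivAt_id t).mul_const (x ω)).add_const (c ω)).exp

end ExpIntegral

section Symmetry

variable {Ω : Type*} [MeasurableSpace Ω] {μ : Measure Ω} {x : Ω → ℝ} {T : Ω → Ω}

lemma mul_sinh_mul_pos {a x : ℝ} (ha : 0 < a) (hx : x ≠ 0) : 0 < x * sinh (a * x) := by
  rcases hx.lt_or_gt with hx | hx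
  · exact mul_pos_of_neg_of_neg hx (sinh_neg_iff.2 (mul_neg_of_pos_of_neg ha hx))
  · exact mul_pos hx (sinh_pos_iff.2 (mul_pos ha hx))

lemma not_ae_eq_of_comp_eq_neg [NeZero μ] (hT : MeasurePreserving T μ μ)
    (hxT : ∀ ω, x (T ω) = -x ω) {a : ℝ} (ha : a ≠ 0) : ¬ ∀ᵐ ω ∂μ, x ω = a := by
  intro h
  have hT' : ∀ᵐ ω ∂μ, x (T ω) = a := hT.quasiMeasurePreserving.tendsto_ae.eventually h
  obtain ⟨ω, h₁, h₂⟩ := (h.and hT').exists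
  rw [hxT] at h₂
  exact ha (by linarith)

theorem integral_mul_exp_mul_add_pos {c : Ω → ℝ} (hT : MeasurePreserving T μ μ)
    (hxT : ∀ ω, x (T ω) = -x ω) (hcT : ∀ ω, c (T ω) = c ω) {a : ℝ} (ha : 0 < a)
    (hint : Integrable (fun ω => x ω * exp (a * x ω + c ω)) μ) (hx0 : ¬ ∀ᵐ ω ∂μ, x ω = 0) :
    0 < ∫ ω, x ω * exp (a * x ω + c ω) ∂μ := by
  set g := fun ω => x ω * exp (a * x ω + c ω)
  have hgT : Integrable (fun ω => g (T ω)) μ := hT.integrable_comp_of_integrable hint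
  have hsum : ∀ ω, g ω + g (T ω) = 2 * (x ω * sinh (a * x ω)) * exp (c ω) := by
    intro ω
    simp only [g, hxT, hcT, sinh_eq, exp_add, mul_neg, exp_neg]
    ring
  have hpos : 0 < ∫ ω, (g ω + g (T ω)) ∂μ := by
    refine (integral_pos_iff_support_of_nonneg_ae (.of_forall fun ω => ?_) (hint.add hgT)).2 ?_
    · rw [Pi.zero_apply, Pi.add_apply, hsum]
      rcases eq_or_ne (x ω) 0 with h | h
      · simp [h]
      · have := mul_sinh_mul_pos ha h
        positivity
    · refine (pos_iff_ne_zero.2 (mt ae_iff.2 hx0)).trans_le (measure_mono fun ω hω => ?_)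
      rw [Function.mem_support, Pi.add_apply, hsum]
      have := mul_sinh_mul_pos ha hω
      positivity
  have hcomp : ∫ ω, g (T ω) ∂μ = ∫ ω, g ω ∂μ := by
    rw [← integral_map hT.measurable.aemeasurable (hT.map_eq.symm ▸ hint.1), hT.map_eq]
  rw [integral_add hint hgT, hcomp] at hpos
  linarith

theorem integral_mul_lt_integral {w : Ω → ℝ} (hw : ∀ ω, 0 < w ω) (hwi : Integrable w μ)
    (hxw : Integrable (fun ω => x ω * w ω) μ) (hx : ∀ᵐ ω ∂μ, x ω ≤ 1)
    (hx1 : ¬ ∀ᵐ ω ∂μ, x ω = 1) : ∫ ω, x ω * w ω ∂μ < ∫ ω, w ω ∂μ := by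
  have hpos : 0 < ∫ ω, (w ω - x ω * w ω) ∂μ := by
    refine (integral_pos_iff_support_of_nonneg_ae ?_ (hwi.sub hxw)).2 ?_
    · filter_upwards [hx] with ω hω
      rw [Pi.zero_apply, Pi.sub_apply, ← one_sub_mul]
      exact mul_nonneg (sub_nonneg.2 hω) (hw ω).le
    · refine (pos_iff_ne_zero.2 (mt ae_iff.2 hx1)).trans_le (measure_mono fun ω hω => ?_)
      rw [Function.mem_support, Pi.sub_apply, ← one_sub_mul]
      exact mul_ne_zero (sub_ne_zero.2 (Ne.symm hω)) (hw ω).ne'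
  rw [integral_sub hwi hxw] at hpos
  linarith

end Symmetry

section Stiefel

variable {m k : Type*} [Fintype m] [DecidableEq k] {X : Matrix m k ℝ}

lemma sum_mul_self_eq_one_of_transpose_mul_self_eq_one (hX : Xᵀ * X = 1) (j : k) :
    ∑ a, X a j * X a j = 1 := by
  simpa [mul_apply] using congr_fun₂ hX j j

lemma abs_le_one_of_transpose_mul_self_eq_one (hX : Xᵀ * X = 1) (a : m) (j : k) :
    |X a j| ≤ 1 := by
  rw [abs_le_one_iff_mul_self_le_one, ← sum_mul_self_eq_one_of_transpose_mul_self_eq_one hX j]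
  exact Finset.single_le_sum (f := fun a => X a j * X a j) (fun _ _ => mul_self_nonneg _)
    (Finset.mem_univ a)

lemma exists_ne_zero_of_transpose_mul_self_eq_one (hX : Xᵀ * X = 1) (j : k) :
    ∃ a, X a j ≠ 0 := by
  by_contra! h
  simpa [h] using sum_mul_self_eq_one_of_transpose_mul_self_eq_one hX j

lemma sum_mul_le_sum_abs_of_transpose_mul_self_eq_one [Fintype k] (hX : Xᵀ * X = 1)
    (e : k → ℝ) (σ : k → m) : ∑ j, e j * X (σ j) j ≤ ∑ j, |e j| :=
  Finset.sum_le_sum fun j _ => (le_abs_self _).trans <| by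
    rw [abs_mul]
    exact mul_le_of_le_one_right (abs_nonneg _) (abs_le_one_of_transpose_mul_self_eq_one hX _ _)

end Stiefel

section Orthogonal

variable {m : Type*} [Fintype m] [DecidableEq m]

lemma transpose_permMatrix_mul_self (σ : Equiv.Perm m) :
    (σ.permMatrix ℝ)ᵀ * σ.permMatrix ℝ = 1 := by
  rw [transpose_permMatrix, ← permMatrix_mul, mul_inv_cancel, permMatrix_one]

def coordReflection (r : m) : Matrix m m ℝ := diagonal (Pi.mulSingle r (-1))

lemma transpose_coordReflection_mul_self (r : m) :
    (coordReflection r)ᵀ * coordReflection r = 1 := by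
  rw [coordReflection, diagonal_transpose, diagonal_mul_diagonal, ← diagonal_one]
  congr 1
  ext a
  by_cases h : a = r <;> simp [h]

variable {k : Type*}

lemma coordReflection_mul_apply_self (r : m) (X : Matrix m k ℝ) (j : k) :
    (coordReflection r * X) r j = -X r j := by
  simp [coordReflection]

lemma coordReflection_mul_apply_of_ne {r a : m} (h : a ≠ r) (X : Matrix m k ℝ) (j : k) :
    (coordReflection r * X) a j = X a j := by
  simp [coordReflection, h]

lemma sum_mul_coordReflection_mul_apply [Fintype k] {σ : k → m} (hσ : σ.Injective)
    {e : k → ℝ} {i : k} (hei : e i = 0) (X : Matrix m k ℝ) :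
    ∑ j, e j * (coordReflection (σ i) * X) (σ j) j = ∑ j, e j * X (σ j) j := by
  refine Finset.sum_congr rfl fun j _ => ?_
  rcases eq_or_ne j i with rfl | hj
  · simp [hei]
  · rw [coordReflection_mul_apply_of_ne (hσ.ne hj)]

theorem not_ae_apply_eq_zero [DecidableEq k] [MeasurableSpace (Matrix m k ℝ)]
    {μ : Measure (Matrix m k ℝ)} [NeZero μ] (hS : ∀ᵐ X ∂μ, Xᵀ * X = 1)
    (hinv : ∀ Q : Matrix m m ℝ, Qᵀ * Q = 1 → MeasurePreserving (fun X => Q * X) μ μ)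
    (r : m) (j : k) : ¬ ∀ᵐ X ∂μ, X r j = 0 := by
  intro h
  have hcol : ∀ a, ∀ᵐ X ∂μ, X a j = 0 := fun a => by
    have hσ := hinv _ (transpose_permMatrix_mul_self (Equiv.swap r a))
    filter_upwards [hσ.quasiMeasurePreserving.tendsto_ae.eventually h] with X hX
    simpa [PEquiv.toMatrix_toPEquiv_mul] using hX
  obtain ⟨X, hX0, hX⟩ := ((ae_all_iff.2 hcol).and hS).exists
  obtain ⟨a, ha⟩ := exists_ne_zero_of_transpose_mul_self_eq_one hX j
  exact ha (hX0 a)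

end Orthogonal

section StiefelMeasure

variable {n p : ℕ} {μ : Measure (Matrix (Fin n) (Fin p) ℝ)}

instance matrixBorelSpace : BorelSpace (Matrix (Fin n) (Fin p) ℝ) :=
  inferInstanceAs (BorelSpace (Fin n → Fin p → ℝ))

lemma ae_transpose_mul_self_eq_one [IsProbabilityMeasure μ]
    (hS : μ {X : Matrix (Fin n) (Fin p) ℝ | Xᵀ * X = 1} = 1) : ∀ᵐ X ∂μ, Xᵀ * X = 1 := by
  refine (ae_iff_measure_eq (IsClosed.measurableSet ?_).nullMeasurableSet).2
    (by rw [hS, measure_univ])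
  exact isClosed_eq (continuous_id.matrix_transpose.matrix_mul continuous_id) continuous_const

lemma integrable_exp_sum_mul_apply [IsFiniteMeasure μ] (hS : ∀ᵐ X ∂μ, Xᵀ * X = 1)
    (e : Fin p → ℝ) (σ : Fin p → Fin n) :
    Integrable (fun X => exp (∑ j, e j * X (σ j) j)) μ := by
  refine .of_bound (Continuous.aestronglyMeasurable (by fun_prop)) (exp (∑ j, |e j|)) ?_
  filter_upwards [hS] with X hX
  rw [norm_of_nonneg (exp_nonneg _), exp_le_exp]
  exact sum_mul_le_sum_abs_of_transpose_mul_self_eq_one hX e σ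

lemma hypF_update {hnp : p ≤ n} (d : Fin p → ℝ) (i : Fin p) (t : ℝ) :
    hypF hnp μ (Function.update d i t) = ∫ X, exp (t * X (Fin.castLE hnp i) i +
      ∑ j, Function.update d i 0 j * X (Fin.castLE hnp j) j) ∂μ := by
  simp only [hypF]
  congr 1 with X
  rw [sum_update_mul d (fun j => X (Fin.castLE hnp j) j)]

end StiefelMeasure

theorem stmt4_general {n p : ℕ} (hnp : p ≤ n)
    (μ : Measure (Matrix (Fin n) (Fin p) ℝ))
    (hprob : IsProbabilityMeasure μ)
    (hsupp : μ {X : Matrix (Fin n) (Fin p) ℝ | Xᵀ * X = 1} = 1)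
    (hinv : ∀ Q : Matrix (Fin n) (Fin n) ℝ, Qᵀ * Q = 1 →
      Measure.map (fun X => Q * X) μ = μ)
    (d : Fin p → ℝ) (hd : ∀ j, 0 < d j) (i : Fin p) :
    ∃ D : ℝ, HasDerivAt (fun t => hypF hnp μ (Function.update d i t)) D (d i) ∧
      0 < D ∧ D < hypF hnp μ d := by
  set r := Fin.castLE hnp i
  set c : Matrix (Fin n) (Fin p) ℝ → ℝ :=
    fun X => ∑ j, Function.update d i 0 j * X (Fin.castLE hnp j) j
  have hS := ae_transpose_mul_self_eq_one hsupp
  have hQ (Q : Matrix (Fin n) (Fin n) ℝ) (hQ : Qᵀ * Q = 1) :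
      MeasurePreserving (fun X => Q * X) μ μ :=
    ⟨(continuous_const.matrix_mul continuous_id).measurable, hinv Q hQ⟩
  have hx : AEStronglyMeasurable (fun X : Matrix (Fin n) (Fin p) ℝ => X r i) μ :=
    (continuous_id.matrix_elem r i).measurable.aestronglyMeasurable
  have hx1 : ∀ᵐ X ∂μ, |X r i| ≤ 1 :=
    hS.mono fun X hX => abs_le_one_of_transpose_mul_self_eq_one hX r i
  have hc := integrable_exp_sum_mul_apply hS (Function.update d i 0) (Fin.castLE hnp)
  have hR := hQ _ (transpose_coordReflection_mul_self r)
  have hxR (X : Matrix (Fin n) (Fin p) ℝ) : (coordReflection r * X) r i = -X r i :=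
    coordReflection_mul_apply_self r X i
  have hcR (X : Matrix (Fin n) (Fin p) ℝ) : c (coordReflection r * X) = c X :=
    sum_mul_coordReflection_mul_apply (Fin.castLE_injective hnp) (Function.update_self ..) X
  have hF : hypF hnp μ d = ∫ X, exp (d i * X r i + c X) ∂μ := by
    rw [← hypF_update, Function.update_eq_self]
  refine ⟨∫ X, X r i * exp (d i * X r i + c X) ∂μ, ?_, ?_, ?_⟩
  · simpa only [hypF_update] using hasDerivAt_integral_exp_mul_add hx hx1 hc (d i)
  · exact integral_mul_exp_mul_add_pos hR hxR hcR (hd i) (integrable_mul_exp_mul_add hx hx1 hc _)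
      (not_ae_apply_eq_zero hS hQ r i)
  · rw [hF]
    exact integral_mul_lt_integral (fun X => exp_pos _) (integrable_exp_mul_add hx hx1 hc _)
      (integrable_mul_exp_mul_add hx hx1 hc _) (hx1.mono fun X h => (abs_le.1 h).2)
      (not_ae_eq_of_comp_eq_neg hR hxR one_ne_zero)

/-- For `n ≥ p ≥ 2`, `d ∈ ℝ₊^p` and each `i`, the partial derivative of
`₀F₁(n/2, D²/4)` in `d_i` exists and satisfies `0 < ∂/∂d_i ₀F₁ < ₀F₁`, where `μ` is the
normalized Haar probability measure on `V_{n,p}`. -/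
theorem stmt4 {n p : ℕ} (hp : 2 ≤ p) (hnp : p ≤ n)
    (μ : Measure (Matrix (Fin n) (Fin p) ℝ))
    (hprob : IsProbabilityMeasure μ)
    (hsupp : μ {X : Matrix (Fin n) (Fin p) ℝ | Xᵀ * X = 1} = 1)
    (hinv : ∀ Q : Matrix (Fin n) (Fin n) ℝ, Qᵀ * Q = 1 →
      Measure.map (fun X => Q * X) μ = μ)
    (d : Fin p → ℝ) (hd : ∀ j, 0 < d j) (i : Fin p) :
    ∃ D : ℝ, HasDerivAt (fun t => hypF hnp μ (Function.update d i t)) D (d i) ∧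
      0 < D ∧ D < hypF hnp μ d :=
  stmt4_general hnp μ hprob hsupp hinv d hd i
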